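/- arXiv:1301.0306 — 4 statements merged into one kernel-verified Lean document; each statement's English description precedes it below -/
import Mathlib

section
/- The derivative of x(m) = −1/m + ∫ t/(1 + c m t) dν(t) on (−1/(c b_ν), 0) is x'(m) = 1/m² − c ∫ (t/(1 + c m t))² dν(t), and x' is continuous and strictly increasing on this interval, with x'(m) → +∞ as m ↑ 0. -/
/-!
Write `I(m) = ∫ (t / (1 + c m t))² dν(t)`. For `t ∈ [0, b]` and `m₁ ≤ m ≤ 0` with
`1 + c m₁ b > 0`, the integrand `t / (1 + c m t)` is bounded by `b / (1 + c m₁ b)` and decreases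
in `m`. This uniform bound on each `[m₁, 0]` justifies differentiating under the integral
(`∂ₘ (t / (1 + c m t)) = -c (t / (1 + c m t))²`) and gives continuity of `I`; monotonicity of the
integrand makes `I` antitone, so `x' = 1 / m² - c I` is strictly increasing and, since `I` stays
bounded by `I(m₁)` near `0`, blows up like `1 / m²`.
-/

open MeasureTheory Set Filter

section Pointwise

variable {b c m₁ m t : ℝ}

lemma one_add_mul_mul_le (hc : 0 ≤ c) (hm : m ∈ Icc m₁ 0) (ht : t ∈ Icc 0 b) :
    1 + c * m₁ * b ≤ 1 + c * m * t := by
  nlinarith [mul_nonneg hc (sub_nonneg.2 ht.2),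
    mul_nonneg (sub_nonneg.2 hm.1) (mul_nonneg hc (ht.1.trans ht.2)), hm.2]

lemma one_add_mul_mul_pos (hc : 0 ≤ c) (hm₁ : 0 < 1 + c * m₁ * b) (hm : m ∈ Icc m₁ 0)
    (ht : t ∈ Icc 0 b) : 0 < 1 + c * m * t :=
  hm₁.trans_le (one_add_mul_mul_le hc hm ht)

lemma norm_div_one_add_mul_mul_pow_le (hc : 0 ≤ c) (hm₁ : 0 < 1 + c * m₁ * b)
    (hm : m ∈ Icc m₁ 0) (ht : t ∈ Icc 0 b) (n : ℕ) :
    ‖(t / (1 + c * m * t)) ^ n‖ ≤ (b / (1 + c * m₁ * b)) ^ n := by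
  have hnonneg : 0 ≤ t / (1 + c * m * t) := div_nonneg ht.1 (one_add_mul_mul_pos hc hm₁ hm ht).le
  rw [norm_pow, Real.norm_eq_abs, abs_of_nonneg hnonneg]
  exact pow_le_pow_left₀ hnonneg
    (div_le_div₀ (ht.1.trans ht.2) ht.2 hm₁ (one_add_mul_mul_le hc hm ht)) n

lemma div_one_add_mul_mul_le_of_le (hc : 0 ≤ c) (hm₁ : 0 < 1 + c * m₁ * b) {m m' : ℝ}
    (hm : m ∈ Icc m₁ 0) (hmm' : m ≤ m') (ht : t ∈ Icc 0 b) :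
    t / (1 + c * m' * t) ≤ t / (1 + c * m * t) :=
  div_le_div_of_nonneg_left ht.1 (one_add_mul_mul_pos hc hm₁ hm ht)
    (by nlinarith [mul_nonneg (mul_nonneg hc ht.1) (sub_nonneg.2 hmm')])

lemma hasDerivAt_div_one_add_mul_mul (hden : 1 + c * m * t ≠ 0) :
    HasDerivAt (fun m => t / (1 + c * m * t)) (-(c * (t / (1 + c * m * t)) ^ 2)) m := by
  have hlin : HasDerivAt (fun m => 1 + c * m * t) (c * t) m := by
    simpa using (((hasDerivAt_id m).const_mul c).mul_const t).const_add 1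
  refine ((hasDerivAt_const m t).div hlin hden).congr_deriv ?_
  field_simp
  ring

end Pointwise

section Integral

variable {ν : Measure ℝ} [IsFiniteMeasure ν] {b c m₁ : ℝ}

lemma integrable_div_one_add_mul_mul_pow (hν : ∀ᵐ t ∂ν, t ∈ Icc 0 b) (hc : 0 ≤ c)
    (hm₁ : 0 < 1 + c * m₁ * b) {m : ℝ} (hm : m ∈ Icc m₁ 0) (n : ℕ) :
    Integrable (fun t => (t / (1 + c * m * t)) ^ n) ν :=
  Integrable.of_bound (Measurable.aestronglyMeasurable (by fun_prop)) _ <|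
    hν.mono fun _ ht => norm_div_one_add_mul_mul_pow_le hc hm₁ hm ht n

lemma hasDerivAt_integral_div_one_add_mul_mul (hν : ∀ᵐ t ∂ν, t ∈ Icc 0 b) (hc : 0 ≤ c)
    (hm₁ : 0 < 1 + c * m₁ * b) {m₀ : ℝ} (hm₀ : m₀ ∈ Ioo m₁ 0) :
    HasDerivAt (fun m => ∫ t, t / (1 + c * m * t) ∂ν)
      (-(c * ∫ t, (t / (1 + c * m₀ * t)) ^ 2 ∂ν)) m₀ := by
  have hF : Integrable (fun t => t / (1 + c * m₀ * t)) ν := by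
    simpa using integrable_div_one_add_mul_mul_pow hν hc hm₁ (Ioo_subset_Icc_self hm₀) 1
  have key := hasDerivAt_integral_of_dominated_loc_of_deriv_le (Ioo_mem_nhds hm₀.1 hm₀.2)
    (F := fun m t => t / (1 + c * m * t)) (F' := fun m t => -(c * (t / (1 + c * m * t)) ^ 2))
    (bound := fun _ => c * (b / (1 + c * m₁ * b)) ^ 2)
    (Eventually.of_forall fun _ => Measurable.aestronglyMeasurable (by fun_prop)) hF
    (Measurable.aestronglyMeasurable (by fun_prop))
    (hν.mono fun t ht m hm => by
      rw [norm_neg, norm_mul, Real.norm_of_nonneg hc]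
      exact mul_le_mul_of_nonneg_left
        (norm_div_one_add_mul_mul_pow_le hc hm₁ (Ioo_subset_Icc_self hm) ht 2) hc)
    (integrable_const _)
    (hν.mono fun t ht m hm => hasDerivAt_div_one_add_mul_mul
      (one_add_mul_mul_pos hc hm₁ (Ioo_subset_Icc_self hm) ht).ne')
  rw [← integral_const_mul, ← integral_neg]
  exact key.2

lemma continuousAt_integral_sq_div_one_add_mul_mul (hν : ∀ᵐ t ∂ν, t ∈ Icc 0 b) (hc : 0 ≤ c)
    (hm₁ : 0 < 1 + c * m₁ * b) {m₀ : ℝ} (hm₀ : m₀ ∈ Ioo m₁ 0) :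
    ContinuousAt (fun m => ∫ t, (t / (1 + c * m * t)) ^ 2 ∂ν) m₀ :=
  continuousAt_of_dominated (bound := fun _ => (b / (1 + c * m₁ * b)) ^ 2)
    (Eventually.of_forall fun _ => Measurable.aestronglyMeasurable (by fun_prop))
    (eventually_of_mem (Ioo_mem_nhds hm₀.1 hm₀.2) fun _ hm =>
      hν.mono fun _ ht => norm_div_one_add_mul_mul_pow_le hc hm₁ (Ioo_subset_Icc_self hm) ht 2)
    (integrable_const _)
    (hν.mono fun _ ht =>
      (hasDerivAt_div_one_add_mul_mul
        (one_add_mul_mul_pos hc hm₁ (Ioo_subset_Icc_self hm₀) ht).ne').continuousAt.pow 2)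

lemma antitoneOn_integral_sq_div_one_add_mul_mul (hν : ∀ᵐ t ∂ν, t ∈ Icc 0 b) (hc : 0 ≤ c)
    (hm₁ : 0 < 1 + c * m₁ * b) :
    AntitoneOn (fun m => ∫ t, (t / (1 + c * m * t)) ^ 2 ∂ν) (Icc m₁ 0) := by
  intro m hm m' hm' hmm'
  refine integral_mono_ae (integrable_div_one_add_mul_mul_pow hν hc hm₁ hm' 2)
    (integrable_div_one_add_mul_mul_pow hν hc hm₁ hm 2) (hν.mono fun t ht => ?_)
  exact pow_le_pow_left₀ (div_nonneg ht.1 (one_add_mul_mul_pos hc hm₁ hm' ht).le)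
    (div_one_add_mul_mul_le_of_le hc hm₁ hm hmm' ht) 2

end Integral

lemma tendsto_one_div_sq_sub_nhdsLT_zero (C : ℝ) :
    Tendsto (fun m : ℝ => 1 / m ^ 2 - C) (nhdsWithin 0 (Iio 0)) atTop := by
  have h := tendsto_atTop_add_const_right _ (-C)
    (tendsto_inv_nhdsLT_zero.atBot_mul_atBot₀ tendsto_inv_nhdsLT_zero)
  refine h.congr fun m => ?_
  ring

/-- The derivative of x(m) = −1/m + ∫ t/(1 + c m t) dν(t) on
(−1/(c b_ν), 0) is x'(m) = 1/m² − c ∫ (t/(1 + c m t))² dν(t); this derivative is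
continuous and strictly increasing on the interval and tends to +∞ as m ↑ 0. -/
theorem stmt2
    (ν : Measure ℝ) [IsProbabilityMeasure ν]
    (aν bν c : ℝ) (haν : 0 < aν) (hab : aν ≤ bν) (hc : 0 < c)
    (hsupp : ν (Icc aν bν)ᶜ = 0)
    (x x' : ℝ → ℝ)
    (hx : ∀ m ∈ Ioo (-(1 / (c * bν))) 0,
      x m = -(1 / m) + ∫ t, t / (1 + c * m * t) ∂ν)
    (hx' : ∀ m ∈ Ioo (-(1 / (c * bν))) 0,
      x' m = 1 / m ^ 2 - c * ∫ t, (t / (1 + c * m * t)) ^ 2 ∂ν) :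
    (∀ m ∈ Ioo (-(1 / (c * bν))) 0, HasDerivAt x (x' m) m) ∧
    ContinuousOn x' (Ioo (-(1 / (c * bν))) 0) ∧
    StrictMonoOn x' (Ioo (-(1 / (c * bν))) 0) ∧
    Tendsto x' (nhdsWithin 0 (Iio 0)) atTop := by
  set L := -(1 / (c * bν)) with hL
  have hcb : 0 < c * bν := mul_pos hc (haν.trans_le hab)
  have hL0 : L < 0 := neg_neg_of_pos (by positivity)
  have hpos : ∀ m, L < m → 0 < 1 + c * m * bν := fun m hm => by
    rw [hL, neg_lt, lt_div_iff₀ hcb] at hm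
    nlinarith
  have hν : ∀ᵐ t ∂ν, t ∈ Icc 0 bν :=
    Eventually.mono (mem_ae_iff.2 hsupp) fun _ ht => ⟨haν.le.trans ht.1, ht.2⟩
  have hI := fun m₁ hm₁ => antitoneOn_integral_sq_div_one_add_mul_mul hν hc.le (hpos m₁ hm₁)
  refine ⟨fun m₀ hm₀ => ?_, fun m₀ hm₀ => ?_, fun m hm m' hm' hmm' => ?_, ?_⟩
  · obtain ⟨m₁, hLm₁, hm₁⟩ := exists_between hm₀.1
    have hinv : HasDerivAt (fun m : ℝ => -(1 / m)) (1 / m₀ ^ 2) m₀ := by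
      simpa [one_div] using (hasDerivAt_inv hm₀.2.ne).fun_neg
    have h := hinv.add
      (hasDerivAt_integral_div_one_add_mul_mul hν hc.le (hpos m₁ hLm₁) ⟨hm₁, hm₀.2⟩)
    rw [hx' m₀ hm₀, sub_eq_add_neg]
    exact h.congr_of_eventuallyEq (eventuallyEq_of_mem (isOpen_Ioo.mem_nhds hm₀) hx)
  · obtain ⟨m₁, hLm₁, hm₁⟩ := exists_between hm₀.1
    have h : ContinuousAt (fun m => 1 / m ^ 2 - c * ∫ t, (t / (1 + c * m * t)) ^ 2 ∂ν) m₀ :=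
      (continuousAt_const.div (continuousAt_id.pow 2) (pow_ne_zero 2 hm₀.2.ne)).sub
        (continuousAt_const.mul (continuousAt_integral_sq_div_one_add_mul_mul hν hc.le
          (hpos m₁ hLm₁) ⟨hm₁, hm₀.2⟩))
    exact (h.congr (eventuallyEq_of_mem (isOpen_Ioo.mem_nhds hm₀) hx').symm).continuousWithinAt
  · rw [hx' m hm, hx' m' hm']
    have hsq : 1 / m ^ 2 < 1 / m' ^ 2 :=
      one_div_lt_one_div_of_lt (by nlinarith [hm'.2]) (by nlinarith [hm'.2])
    have := hI m hm.1 ⟨le_rfl, hm.2.le⟩ ⟨hmm'.le, hm'.2.le⟩ hmm'.le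
    linarith [mul_le_mul_of_nonneg_left this hc.le]
  · obtain ⟨m₁, hLm₁, hm₁⟩ := exists_between hL0
    refine tendsto_atTop_mono' _ ?_
      (tendsto_one_div_sq_sub_nhdsLT_zero (c * ∫ t, (t / (1 + c * m₁ * t)) ^ 2 ∂ν))
    filter_upwards [Ioo_mem_nhdsLT hm₁] with m hm
    rw [hx' m ⟨hLm₁.trans hm.1, hm.2⟩]
    have := hI m₁ hLm₁ ⟨le_rfl, hm₁.le⟩ ⟨hm.1.le, hm.2.le⟩ hm.1.le
    linarith [mul_le_mul_of_nonneg_left this hc.le]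
end

section
/- Let μ be a probability measure with compact support in [0, b], with Stieltjes transform m(x) on (b, ∞), let c > 0 and ν a probability measure with support in [0, b_ν] such that m satisfies m(x) = (−x + ∫ t/(1 + c m(x) t) dν(t))^{-1} for x > b and 1 + c m(x) t > 0 on the support of ν. Define Δ(x) = 1 − c ∫ (m(x) t/(1 + c m(x) t))² dν(t). Then m'(x) = m(x)²/Δ(x) and Δ(x) > 0 for all x > b. -/
/-!
Near `x > b` the fixed-point equation reads `(m y)⁻¹ = -y + G (c * m y)` with
`G s = ∫ t / (1 + s t) dν`, and both `m` and `G` can be differentiated under the integral sign,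
`m' = ∫ (t - x)⁻² dμ` and `G' s = -∫ t² / (1 + s t)² dν`. Differentiating the equation gives
`m'(x) Δ(x) = m(x)²`, and `Δ(x) > 0` then follows from `m'(x) > 0`.
-/

open MeasureTheory Set Filter Topology

theorem integral_pos_of_ae_pos {α : Type*} [MeasurableSpace α] {μ : Measure α} [NeZero μ]
    {f : α → ℝ} (hf : ∀ᵐ a ∂μ, 0 < f a) (hfi : Integrable f μ) : 0 < ∫ a, f a ∂μ := by
  rw [integral_pos_iff_support_of_nonneg_ae (hf.mono fun _ ha => ha.le) hfi, pos_iff_ne_zero]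
  intro h
  obtain ⟨a, ha, ha'⟩ := (hf.and (measure_eq_zero_iff_ae_notMem.1 h)).exists
  exact ha' ha.ne'

section Stieltjes

variable {μ : Measure ℝ} {b x : ℝ}

theorem integrable_one_div_sub_of_ae_le [IsFiniteMeasure μ] (hμ : ∀ᵐ t ∂μ, t ≤ b)
    (hx : b < x) : Integrable (fun t => 1 / (t - x)) μ := by
  refine Integrable.mono' (integrable_const (x - b)⁻¹)
    (measurable_const.div (measurable_id.sub_const x)).aestronglyMeasurable ?_
  filter_upwards [hμ] with t ht
  rw [Real.norm_eq_abs, abs_div, abs_one, abs_of_neg (by linarith), one_div]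
  exact inv_anti₀ (by linarith) (by linarith)

theorem integral_one_div_sub_neg_of_ae_le [IsFiniteMeasure μ] [NeZero μ]
    (hμ : ∀ᵐ t ∂μ, t ≤ b) (hx : b < x) : ∫ t, 1 / (t - x) ∂μ < 0 := by
  have hpos : 0 < ∫ t, -(1 / (t - x)) ∂μ := by
    refine integral_pos_of_ae_pos ?_ (integrable_one_div_sub_of_ae_le hμ hx).neg
    filter_upwards [hμ] with t ht
    exact neg_pos.2 (one_div_neg.2 (by linarith))
  rwa [integral_neg, neg_pos] at hpos

theorem hasDerivAt_integral_one_div_sub_of_ae_le [IsFiniteMeasure μ] (hμ : ∀ᵐ t ∂μ, t ≤ b)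
    (hx : b < x) :
    Integrable (fun t => 1 / (t - x) ^ 2) μ ∧
      HasDerivAt (fun y => ∫ t, 1 / (t - y) ∂μ) (∫ t, 1 / (t - x) ^ 2 ∂μ) x := by
  obtain ⟨ε, hε, hxε⟩ : ∃ ε, 0 < ε ∧ b + 2 * ε = x := ⟨(x - b) / 2, by linarith, by ring⟩
  have hgap : ∀ t ≤ b, ∀ y ∈ Metric.ball x ε, ε ≤ y - t := by
    intro t ht y hy
    rw [Metric.mem_ball, Real.dist_eq, abs_lt] at hy
    linarith
  refine hasDerivAt_integral_of_dominated_loc_of_deriv_le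
    (F := fun y t => 1 / (t - y)) (F' := fun y t => 1 / (t - y) ^ 2) (bound := fun _ => (ε ^ 2)⁻¹)
    (Metric.ball_mem_nhds x hε)
    (Eventually.of_forall fun y =>
      (measurable_const.div (measurable_id.sub_const y)).aestronglyMeasurable)
    (integrable_one_div_sub_of_ae_le hμ hx)
    (measurable_const.div ((measurable_id.sub_const _).pow_const 2)).aestronglyMeasurable
    ?_ (integrable_const _) ?_
  · filter_upwards [hμ] with t ht y hy
    have h := hgap t ht y hy
    rw [Real.norm_eq_abs, abs_div, abs_one, abs_pow, one_div, abs_sub_comm,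
      abs_of_pos (by linarith)]
    exact inv_anti₀ (by positivity) (pow_le_pow_left₀ hε.le h 2)
  · filter_upwards [hμ] with t ht y hy
    have hne : t - y ≠ 0 := by linarith [hgap t ht y hy]
    simpa [one_div, Pi.inv_def] using ((hasDerivAt_id y).const_sub t).inv hne

end Stieltjes

theorem hasDerivAt_div_one_add_mul (t : ℝ) {s : ℝ} (hs : 1 + s * t ≠ 0) :
    HasDerivAt (fun s => t / (1 + s * t)) (-(t ^ 2 / (1 + s * t) ^ 2)) s := by
  have h : HasDerivAt (fun s => t / (1 + s * t))
      ((0 * (1 + s * t) - t * (1 * t)) / (1 + s * t) ^ 2) s :=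
    (hasDerivAt_const s t).div (((hasDerivAt_id' s).mul_const t).const_add 1) hs
  exact h.congr_deriv (by ring)

theorem hasDerivAt_integral_div_one_add_mul {ν : Measure ℝ} [IsFiniteMeasure ν] {B δ s₀ : ℝ}
    (hB : ∀ᵐ t ∂ν, |t| ≤ B) (hδ : 0 < δ) (hs₀ : ∀ᵐ t ∂ν, δ ≤ 1 + s₀ * t) :
    HasDerivAt (fun s => ∫ t, t / (1 + s * t) ∂ν) (-∫ t, t ^ 2 / (1 + s₀ * t) ^ 2 ∂ν) s₀ := by
  set r := δ / (2 * (|B| + 1)) with hr_def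
  have hr : 0 < r := by positivity
  have hnear : ∀ t, |t| ≤ B → δ ≤ 1 + s₀ * t → ∀ s ∈ Metric.ball s₀ r, δ / 2 ≤ 1 + s * t := by
    intro t ht hδt s hs
    rw [Metric.mem_ball, Real.dist_eq] at hs
    have hrB : r * |B| ≤ δ / 2 := by
      calc r * |B| ≤ r * (|B| + 1) := by linarith
        _ = δ / 2 := by rw [hr_def]; field_simp
    have hdev : |(s - s₀) * t| ≤ δ / 2 := by
      rw [abs_mul]
      calc |s - s₀| * |t| ≤ r * |B| :=
            mul_le_mul hs.le (ht.trans (le_abs_self B)) (abs_nonneg t) hr.le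
        _ ≤ δ / 2 := hrB
    linarith [neg_abs_le ((s - s₀) * t)]
  rw [← integral_neg]
  refine (hasDerivAt_integral_of_dominated_loc_of_deriv_le
    (F := fun s t => t / (1 + s * t)) (F' := fun s t => -(t ^ 2 / (1 + s * t) ^ 2))
    (bound := fun _ => B ^ 2 / (δ / 2) ^ 2) (Metric.ball_mem_nhds s₀ hr)
    (Eventually.of_forall fun s => (by fun_prop : Measurable _).aestronglyMeasurable) ?_
    (by fun_prop : Measurable _).aestronglyMeasurable ?_ (integrable_const _) ?_).2
  · refine Integrable.mono' (integrable_const (B / δ))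
      (by fun_prop : Measurable _).aestronglyMeasurable ?_
    filter_upwards [hB, hs₀] with t ht hδt
    rw [Real.norm_eq_abs, abs_div, abs_of_pos (show 0 < 1 + s₀ * t by linarith)]
    exact div_le_div₀ ((abs_nonneg t).trans ht) ht hδ hδt
  · filter_upwards [hB, hs₀] with t ht hδt s hs
    have hden := hnear t ht hδt s hs
    rw [norm_neg, Real.norm_eq_abs, abs_of_nonneg (by positivity)]
    exact div_le_div₀ (by positivity) (sq_le_sq' (neg_le_of_abs_le ht) (le_of_abs_le ht))
      (by positivity) (pow_le_pow_left₀ (by positivity) hden 2)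
  · filter_upwards [hB, hs₀] with t ht hδt s hs
    exact hasDerivAt_div_one_add_mul t (by linarith [hnear t ht hδt s hs])

theorem mul_one_add_eq_sq_of_inv_eq_neg_add_comp {m G : ℝ → ℝ} {x c D G' : ℝ}
    (hm : HasDerivAt m D x) (hmx : m x ≠ 0) (hG : HasDerivAt G G' (c * m x))
    (hfix : ∀ᶠ y in 𝓝 x, (m y)⁻¹ = -y + G (c * m y)) :
    D * (1 + c * m x ^ 2 * G') = m x ^ 2 := by
  have hsub : HasDerivAt (fun y => G (c * m y) - (m y)⁻¹) (G' * (c * D) - -D / m x ^ 2) x :=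
    (hG.comp x (hm.const_mul c)).sub (hm.inv hmx)
  have hid : (fun y => G (c * m y) - (m y)⁻¹) =ᶠ[𝓝 x] id :=
    hfix.mono fun y hy => by simp only [hy, id]; ring
  have hone : G' * (c * D) - -D / m x ^ 2 = 1 :=
    (hsub.congr_of_eventuallyEq hid.symm).unique (hasDerivAt_id x)
  field_simp at hone
  linear_combination hone

theorem stmt9_general
    (μ ν : Measure ℝ) [IsProbabilityMeasure μ] [IsProbabilityMeasure ν]
    (b bν c : ℝ)
    (hsuppμ : μ (Icc 0 b)ᶜ = 0) (hsuppν : ν (Icc 0 bν)ᶜ = 0)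
    (m : ℝ → ℝ)
    (hst : ∀ x ∈ Ioi b, m x = ∫ t, 1 / (t - x) ∂μ)
    (hpos : ∀ x ∈ Ioi b, ∃ δ > 0, ∀ t ∈ Icc 0 bν, δ ≤ 1 + c * m x * t)
    (hfix : ∀ x ∈ Ioi b, m x = (-x + ∫ t, t / (1 + c * m x * t) ∂ν)⁻¹)
    (Δ : ℝ → ℝ)
    (hΔ : ∀ x ∈ Ioi b, Δ x = 1 - c * ∫ t, (m x * t / (1 + c * m x * t)) ^ 2 ∂ν) :
    ∀ x ∈ Ioi b, 0 < Δ x ∧ HasDerivAt m (m x ^ 2 / Δ x) x := by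
  intro x hx
  have hμ : ∀ᵐ t ∂μ, t ≤ b := Eventually.mono (mem_ae_iff.2 hsuppμ) fun t ht => ht.2
  have hν : ∀ᵐ t ∂ν, t ∈ Icc 0 bν := mem_ae_iff.2 hsuppν
  have hnhds : ∀ᶠ y in 𝓝 x, y ∈ Ioi b := isOpen_Ioi.mem_nhds hx
  obtain ⟨hint, hderiv⟩ := hasDerivAt_integral_one_div_sub_of_ae_le hμ hx
  set D := ∫ t, 1 / (t - x) ^ 2 ∂μ
  have hm : HasDerivAt m D x := hderiv.congr_of_eventuallyEq (hnhds.mono hst)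
  have hmx : m x < 0 := hst x hx ▸ integral_one_div_sub_neg_of_ae_le hμ hx
  have hD : 0 < D := integral_pos_of_ae_pos
    (hμ.mono fun t ht => one_div_pos.2 (sq_pos_of_neg (sub_neg.2 (ht.trans_lt hx)))) hint
  obtain ⟨δ, hδ, hδt⟩ := hpos x hx
  have hG := hasDerivAt_integral_div_one_add_mul
    (hν.mono fun t ht => abs_le.2 ⟨by linarith [ht.1, ht.2], ht.2⟩) hδ (hν.mono hδt)
  have hDΔ : D * Δ x = m x ^ 2 := by
    have key := mul_one_add_eq_sq_of_inv_eq_neg_add_comp hm hmx.ne hG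
      (hnhds.mono fun y hy => inv_eq_iff_eq_inv.2 (hfix y hy))
    have hI : ∫ t, (m x * t / (1 + c * m x * t)) ^ 2 ∂ν =
        m x ^ 2 * ∫ t, t ^ 2 / (1 + c * m x * t) ^ 2 ∂ν := by
      rw [← integral_const_mul]
      congr 1 with t
      rw [div_pow, mul_pow, mul_div_assoc]
    rw [hΔ x hx, hI]
    linear_combination key
  have hΔx : 0 < Δ x := pos_of_mul_pos_right (hDΔ ▸ pow_two_pos_of_ne_zero hmx.ne) hD.le
  exact ⟨hΔx, by rwa [← hDΔ, mul_div_cancel_right₀ D hΔx.ne']⟩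

/-- If m is the Stieltjes transform of a probability measure μ supported
in [0,b] and satisfies the fixed-point equation
m(x) = (−x + ∫ t/(1 + c m(x) t) dν(t))⁻¹ on (b,∞), with 1 + c m(x) t bounded away
from 0 on supp(ν), then, defining Δ(x) = 1 − c ∫ (m(x) t/(1 + c m(x) t))² dν(t),
one has Δ(x) > 0 and m'(x) = m(x)²/Δ(x) for all x > b. -/
theorem stmt9
    (μ ν : Measure ℝ) [IsProbabilityMeasure μ] [IsProbabilityMeasure ν]
    (b bν c : ℝ) (hb : 0 < b) (hbν : 0 < bν) (hc : 0 < c)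
    (hsuppμ : μ (Icc 0 b)ᶜ = 0) (hsuppν : ν (Icc 0 bν)ᶜ = 0)
    (m : ℝ → ℝ)
    (hst : ∀ x ∈ Ioi b, m x = ∫ t, 1 / (t - x) ∂μ)
    (hpos : ∀ x ∈ Ioi b, ∃ δ > 0, ∀ t ∈ Icc 0 bν, δ ≤ 1 + c * m x * t)
    (hfix : ∀ x ∈ Ioi b, m x = (-x + ∫ t, t / (1 + c * m x * t) ∂ν)⁻¹)
    (Δ : ℝ → ℝ)
    (hΔ : ∀ x ∈ Ioi b, Δ x = 1 - c * ∫ t, (m x * t / (1 + c * m x * t)) ^ 2 ∂ν) :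
    ∀ x ∈ Ioi b, 0 < Δ x ∧ HasDerivAt m (m x ^ 2 / Δ x) x :=
  stmt9_general μ ν b bν c hsuppμ hsuppν m hst hpos hfix Δ hΔ
end

section
/- Let g(x) = x·m(x)·m̃(x) where m̃(x) = c·m(x) − (1−c)/x, m being the Stieltjes transform of a probability measure μ with support in [0,b], and suppose g can be written g(x) = −∫ m(x)/(1 + c m(x) t) dν(t) with 1 + c m(x) t > 0 on supp(ν) for x > b and m negative increasing to 0 on (b,∞). Then g is positive and strictly decreasing on (b, ∞) and g(x) → 0 as x → ∞. -/
open MeasureTheory Set Filter Topology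

/-! Writing `g x = -F (m x)` with `F u = ∫ u / (1 + c u t) dν(t)`, everything follows from
two properties of `F`. Each Möbius map `u ↦ u / (1 + c t u)` is increasing wherever its
denominator is positive, so `F` is strictly increasing along `m` and `g` strictly decreasing.
For small `u` the denominators are at least `1/2`, so `|F u| ≤ 2 |u|` and `g → 0` as `m → 0`.
A function decreasing to `0` is positive. -/

lemma div_one_add_mul_mul_lt_div_one_add_mul_mul {c t u v : ℝ} (hu : 0 < 1 + c * u * t)
    (hv : 0 < 1 + c * v * t) (huv : u < v) : u / (1 + c * u * t) < v / (1 + c * v * t) := by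
  rw [div_lt_div_iff₀ hu hv]
  linarith

lemma abs_div_one_add_mul_mul_le {c t u B : ℝ} (ht : t ∈ Icc 0 B) (hu : |c * u * B| ≤ 1 / 2) :
    |u / (1 + c * u * t)| ≤ 2 * |u| := by
  have hcut : |c * u * t| ≤ |c * u * B| := by
    rw [abs_mul, abs_mul (c * u), abs_of_nonneg ht.1, abs_of_nonneg (ht.1.trans ht.2)]
    exact mul_le_mul_of_nonneg_left ht.2 (abs_nonneg _)
  have hden : 1 / 2 ≤ 1 + c * u * t := by linarith [neg_abs_le (c * u * t)]
  rw [abs_div, abs_of_pos (a := 1 + c * u * t) (by linarith), div_le_iff₀ (by linarith)]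
  nlinarith [abs_nonneg u]

lemma ContinuousOn.integrable_of_ae_mem {X : Type*} [TopologicalSpace X] [MeasurableSpace X]
    [OpensMeasurableSpace X] [T2Space X] {ν : Measure X} [IsFiniteMeasureOnCompacts ν] {s : Set X}
    {f : X → ℝ} (hf : ContinuousOn f s) (hs : IsCompact s) (hmem : ∀ᵐ x ∂ν, x ∈ s) :
    Integrable f ν := by
  rw [← Measure.restrict_eq_self_of_ae_mem hmem]
  exact hf.integrableOn_compact hs

lemma integral_lt_integral_of_ae_lt {X : Type*} [MeasurableSpace X] {ν : Measure X} [NeZero ν]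
    {f g : X → ℝ} (hf : Integrable f ν) (hg : Integrable g ν) (hfg : ∀ᵐ x ∂ν, f x < g x) :
    ∫ x, f x ∂ν < ∫ x, g x ∂ν := by
  have hsupp : 0 < ν (Function.support fun x => g x - f x) := by
    refine pos_of_ne_zero fun h => ?_
    have hfalse : ∀ᵐ x ∂ν, False := ((measure_eq_zero_iff_ae_notMem.1 h).and hfg).mono
      fun x hx => hx.1 (sub_ne_zero.2 hx.2.ne')
    exact NeZero.ne ν (ae_eq_bot.1 (eventually_false_iff_eq_bot.1 hfalse))
  rw [← sub_pos, ← integral_sub hg hf]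
  exact (integral_pos_iff_support_of_nonneg_ae (hfg.mono fun x hx => (sub_pos.2 hx).le)
    (hg.sub hf)).2 hsupp

lemma StrictAntiOn.lt_of_tendsto_atTop {α β : Type*} [LinearOrder α] [NoMaxOrder α]
    [TopologicalSpace β] [PartialOrder β] [OrderClosedTopology β] {f : α → β} {b : α} {L : β}
    (hf : StrictAntiOn f (Ioi b)) (hL : Tendsto f atTop (𝓝 L)) {x : α} (hx : x ∈ Ioi b) :
    L < f x := by
  have : Nonempty α := ⟨x⟩
  obtain ⟨y, hxy⟩ := exists_gt x
  have hy : y ∈ Ioi b := lt_trans hx hxy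
  have hLy : L ≤ f y := le_of_tendsto hL <| (eventually_ge_atTop y).mono fun z hz =>
    hf.antitoneOn hy (hy.out.trans_le hz) hz
  exact hLy.trans_lt (hf hx hy hxy)

section Moebius

variable {ν : Measure ℝ} {c B : ℝ}

lemma integrable_div_one_add_mul_mul [IsFiniteMeasure ν] (hmem : ∀ᵐ t ∂ν, t ∈ Icc 0 B) {u : ℝ}
    (hpos : ∀ t ∈ Icc 0 B, 0 < 1 + c * u * t) : Integrable (fun t => u / (1 + c * u * t)) ν :=
  (continuousOn_const.div (by fun_prop) fun t ht => (hpos t ht).ne').integrable_of_ae_mem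
    isCompact_Icc hmem

lemma tendsto_integral_div_one_add_mul_mul [IsFiniteMeasure ν] (hmem : ∀ᵐ t ∂ν, t ∈ Icc 0 B) :
    Tendsto (fun u => ∫ t, u / (1 + c * u * t) ∂ν) (𝓝 0) (𝓝 0) := by
  have hsmall : ∀ᶠ u in 𝓝 (0 : ℝ), |c * u * B| ≤ 1 / 2 := by
    have : Tendsto (fun u : ℝ => |c * u * B|) (𝓝 0) (𝓝 0) :=
      (by fun_prop : Continuous fun u : ℝ => |c * u * B|).tendsto' 0 0 (by simp)
    exact this.eventually (ge_mem_nhds (by norm_num))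
  have hbound : Tendsto (fun u : ℝ => 2 * |u| * ν.real univ) (𝓝 0) (𝓝 0) := by
    simpa using ((continuous_abs.tendsto (0 : ℝ)).const_mul 2).mul_const (ν.real univ)
  refine squeeze_zero_norm' (hsmall.mono fun u hu => ?_) hbound
  exact norm_integral_le_of_norm_le_const (hmem.mono fun t ht => abs_div_one_add_mul_mul_le ht hu)

end Moebius

theorem stmt11_general
    (ν : Measure ℝ) [IsProbabilityMeasure ν]
    (b bν c : ℝ)
    (hsuppν : ν (Icc 0 bν)ᶜ = 0)
    (m g : ℝ → ℝ)
    (hmono : StrictMonoOn m (Ioi b))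
    (hm0 : Tendsto m atTop (nhds 0))
    (hpos : ∀ x ∈ Ioi b, ∀ t ∈ Icc 0 bν, 0 < 1 + c * m x * t)
    (hrep : ∀ x ∈ Ioi b, g x = -∫ t, m x / (1 + c * m x * t) ∂ν) :
    (∀ x ∈ Ioi b, 0 < g x) ∧
    StrictAntiOn g (Ioi b) ∧
    Tendsto g atTop (nhds 0) := by
  have hmem : ∀ᵐ t ∂ν, t ∈ Icc 0 bν := ae_iff.2 hsuppν
  have hanti : StrictAntiOn g (Ioi b) := by
    intro x hx y hy hxy
    rw [hrep x hx, hrep y hy, neg_lt_neg_iff]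
    refine integral_lt_integral_of_ae_lt (integrable_div_one_add_mul_mul hmem (hpos x hx))
      (integrable_div_one_add_mul_mul hmem (hpos y hy)) (hmem.mono fun t ht => ?_)
    exact div_one_add_mul_mul_lt_div_one_add_mul_mul (hpos x hx t ht) (hpos y hy t ht)
      (hmono hx hy hxy)
  have hlim : Tendsto g atTop (𝓝 0) := by
    have h := ((tendsto_integral_div_one_add_mul_mul (c := c) hmem).comp hm0).neg
    rw [neg_zero] at h
    exact h.congr' <| (eventually_gt_atTop b).mono fun x hx => (hrep x hx).symm
  exact ⟨fun x hx => hanti.lt_of_tendsto_atTop hlim hx, hanti, hlim⟩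

/-- Let g(x) = x m(x) m̃(x) with m̃(x) = c m(x) − (1−c)/x, where m is
the Stieltjes transform of μ supported in [0,b], negative and strictly increasing
to 0 on (b,∞), and suppose g(x) = −∫ m(x)/(1 + c m(x) t) dν(t) with
1 + c m(x) t > 0 on supp(ν). Then g is positive and strictly decreasing on (b,∞)
and g(x) → 0 as x → ∞. -/
theorem stmt11
    (μ ν : Measure ℝ) [IsProbabilityMeasure μ] [IsProbabilityMeasure ν]
    (b bν c : ℝ) (hb : 0 < b) (hbν : 0 < bν) (hc : 0 < c)
    (hsuppμ : μ (Icc 0 b)ᶜ = 0) (hsuppν : ν (Icc 0 bν)ᶜ = 0) (hν0 : ν {0} = 0)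
    (m mt g : ℝ → ℝ)
    (hst : ∀ x ∈ Ioi b, m x = ∫ t, 1 / (t - x) ∂μ)
    (hneg : ∀ x ∈ Ioi b, m x < 0)
    (hmono : StrictMonoOn m (Ioi b))
    (hm0 : Tendsto m atTop (nhds 0))
    (hmt : ∀ x ∈ Ioi b, mt x = c * m x - (1 - c) / x)
    (hg : ∀ x ∈ Ioi b, g x = x * m x * mt x)
    (hpos : ∀ x ∈ Ioi b, ∀ t ∈ Icc 0 bν, 0 < 1 + c * m x * t)
    (hrep : ∀ x ∈ Ioi b, g x = -∫ t, m x / (1 + c * m x * t) ∂ν) :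
    (∀ x ∈ Ioi b, 0 < g x) ∧
    StrictAntiOn g (Ioi b) ∧
    Tendsto g atTop (nhds 0) :=
  stmt11_general ν b bν c hsuppν m g hmono hm0 hpos hrep
end

section
/- Let (λ̂_{k,T})_{k=1}^{L+1} be, for each T, a decreasing finite sequence of positive reals such that λ̂_{k,T} → ρ_{K(k)} almost surely for k ≤ 𝐤 where ρ_1 ≥ … ≥ ρ_s > b > 0 (𝐤 being the number of such indices) and λ̂_{k,T} → b for 𝐤 < k ≤ L+1. Let 0 < ε < ρ_s/b − 1. Then almost surely, for all T large, the largest index k ∈ {0,…,L} with λ̂_{k,T}/λ̂_{k+1,T} > 1 + ε (with λ̂_{0,T} = ∞) equals 𝐤. -/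
open MeasureTheory Set Filter

/-- Eigenvalue-ratio source detection. If the decreasing positive
sequences λ̂_{1,T} ≥ … ≥ λ̂_{L+1,T} satisfy λ̂_{k,T} → ρ_{K(k)} > b a.s. for
k ≤ 𝐤 and λ̂_{k,T} → b a.s. for 𝐤 < k ≤ L+1, and 0 < ε < ρ_s/b − 1, then almost
surely, for all large T, the largest index k ∈ {0,…,L} with
λ̂_{k,T}/λ̂_{k+1,T} > 1+ε (with λ̂_{0,T} = ∞, so k = 0 always qualifies)
equals 𝐤. -/
theorem stmt15
    {Ω : Type*} [MeasurableSpace Ω] (P : Measure Ω) [IsProbabilityMeasure P]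
    (lamhat : ℕ → ℕ → Ω → ℝ)
    (b ε : ℝ) (hb : 0 < b)
    (L s kk : ℕ) (hs : 1 ≤ s) (hkkL : kk ≤ L)
    (ρ : ℕ → ℝ) (Kmap : ℕ → ℕ)
    (hρanti : ∀ k, 1 ≤ k → k ≤ s → ρ s ≤ ρ k)
    (hρs : b < ρ s)
    (hKmap : ∀ k, 1 ≤ k → k ≤ kk → 1 ≤ Kmap k ∧ Kmap k ≤ s)
    (hε : 0 < ε) (hεub : ε < ρ s / b - 1)
    (hdecr : ∀ T ω k, 1 ≤ k → k ≤ L →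
      0 < lamhat T (k + 1) ω ∧ lamhat T (k + 1) ω ≤ lamhat T k ω)
    (hlim_sig : ∀ k, 1 ≤ k → k ≤ kk →
      ∀ᵐ ω ∂P, Tendsto (fun T => lamhat T k ω) atTop (nhds (ρ (Kmap k))))
    (hlim_noise : ∀ k, kk < k → k ≤ L + 1 →
      ∀ᵐ ω ∂P, Tendsto (fun T => lamhat T k ω) atTop (nhds b)) :
    ∀ᵐ ω ∂P, ∀ᶠ T in atTop,
      sSup {k | k ≤ L ∧ (k = 0 ∨ (1 + ε) * lamhat T (k + 1) ω < lamhat T k ω)} = kk := by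

  have hnoise : ∀ᵐ ω ∂P, ∀ k, kk < k → k ≤ L + 1 →
      Tendsto (fun T => lamhat T k ω) atTop (nhds b) := by
    rw [ae_all_iff]
    intro k
    by_cases h1 : kk < k ∧ k ≤ L + 1
    · filter_upwards [hlim_noise k h1.1 h1.2] with ω h _ _ using h
    · filter_upwards with ω hk1 hk2 using absurd ⟨hk1, hk2⟩ h1
  have hsig' : ∀ᵐ ω ∂P, kk = 0 ∨
      Tendsto (fun T => lamhat T kk ω) atTop (nhds (ρ (Kmap kk))) := by
    rcases Nat.eq_zero_or_pos kk with h | h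
    · filter_upwards with ω using Or.inl h
    · filter_upwards [hlim_sig kk h le_rfl] with ω hω using Or.inr hω
  filter_upwards [hnoise, hsig'] with ω hn hsg
  have E2 : ∀ᶠ T in atTop, ∀ k ∈ Finset.Ioc kk L,
      lamhat T k ω < (1 + ε) * lamhat T (k + 1) ω := by
    rw [eventually_all_finset]
    intro k hk
    rw [Finset.mem_Ioc] at hk
    have h1 := hn k hk.1 (by omega)
    have h2 := hn (k + 1) (by omega) (by omega)
    have h3 : Tendsto (fun T => (1 + ε) * lamhat T (k + 1) ω - lamhat T k ω)
        atTop (nhds ((1 + ε) * b - b)) := (h2.const_mul _).sub h1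
    have hp : (0 : ℝ) < (1 + ε) * b - b := by nlinarith
    filter_upwards [h3.eventually (eventually_gt_nhds hp)] with T hT
    linarith
  have E1 : ∀ᶠ T in atTop,
      kk = 0 ∨ (1 + ε) * lamhat T (kk + 1) ω < lamhat T kk ω := by
    rcases hsg with h0 | hT
    · exact Eventually.of_forall fun _ => Or.inl h0
    · rcases Nat.eq_zero_or_pos kk with h0 | h0
      · exact Eventually.of_forall fun _ => Or.inl h0
      · have h2 := hn (kk + 1) (by omega) (by omega)
        have h3 : Tendsto (fun T => lamhat T kk ω - (1 + ε) * lamhat T (kk + 1) ω)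
            atTop (nhds (ρ (Kmap kk) - (1 + ε) * b)) := hT.sub (h2.const_mul _)
        have hK := hKmap kk h0 le_rfl
        have hρ := hρanti (Kmap kk) hK.1 hK.2
        have hεb : (1 + ε) * b < ρ s := by
          have h4 : 1 + ε < ρ s / b := by linarith
          have := (lt_div_iff₀ hb).mp h4
          linarith
        have hp : 0 < ρ (Kmap kk) - (1 + ε) * b := by linarith
        filter_upwards [h3.eventually (eventually_gt_nhds hp)] with T hT'
        right; linarith
  filter_upwards [E1, E2] with T h1 h2
  have hub : ∀ x ∈ {k | k ≤ L ∧ (k = 0 ∨ (1 + ε) * lamhat T (k + 1) ω < lamhat T k ω)},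
      x ≤ kk := by
    rintro x ⟨hxL, hx⟩
    by_contra hc
    push_neg at hc
    rcases hx with rfl | hx
    · omega
    · have := h2 x (Finset.mem_Ioc.mpr ⟨hc, hxL⟩)
      linarith
  have hmem : kk ∈ {k | k ≤ L ∧ (k = 0 ∨ (1 + ε) * lamhat T (k + 1) ω < lamhat T k ω)} :=
    ⟨hkkL, h1⟩
  exact le_antisymm (csSup_le ⟨kk, hmem⟩ hub) (le_csSup ⟨kk, hub⟩ hmem)
end
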